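/- For each n ≥ 2 let c_n, d_n > 0 with c_n, d_n = o(log n), p_n = c_n/n ∈ (0,1), q_n = d_n/n ∈ (0,1), let the prior on Θ_n be uniform, and let θ_n ∈ Θ_n. If (c_n − d_n)²/(2(c_n + d_n)) → ∞ as n → ∞, then there exists a sequence a_n ∈ (0, 1/2) with a_n → 0 such that P_{θ_n} Π(B_n(θ_n, ⌈a_n·n⌉) | X^n) → 1, i.e. the posterior recovers the true community assignment almost-exactly with error rate k_n = ⌈a_n·n⌉ for some vanishing fraction a_n → 0. -/

import Mathlib

open Finset Real Filter

/-- The set of potential edges of an `n`-vertex graph: pairs `(i,j)` with `i < j`. -/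
abbrev Edge (n : ℕ) := {e : Fin n × Fin n // e.1 < e.2}

/-- An observed graph: an edge indicator for each potential edge. -/
abbrev ObsGraph (n : ℕ) := Edge n → Bool

/-- Edge probability under assignment `θ`: `p` within communities, `q` between. -/
noncomputable def edgeProb {n : ℕ} (p q : ℝ) (θ : Fin n → Bool) (e : Edge n) : ℝ :=
  if θ e.val.1 = θ e.val.2 then p else q

/-- Probability mass function of the observed graph under `θ`. -/
noncomputable def graphPMF {n : ℕ} (p q : ℝ) (θ : Fin n → Bool) (x : ObsGraph n) : ℝ :=
  ∏ e : Edge n, if x e then edgeProb p q θ e else 1 - edgeProb p q θ e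

/-- Hellinger affinity of Bernoulli parameters. -/
noncomputable def rho (p q : ℝ) : ℝ := Real.sqrt (p * q) + Real.sqrt ((1 - p) * (1 - q))

/-- Edges whose probability changes from `p` to `q` when replacing `θ` by `η`. -/
def D1 {n : ℕ} (θ η : Fin n → Bool) : Finset (Fin n × Fin n) :=
  Finset.univ.filter fun e => e.1 < e.2 ∧ θ e.1 = θ e.2 ∧ η e.1 ≠ η e.2

/-- Edges whose probability changes from `q` to `p` when replacing `θ` by `η`. -/
def D2 {n : ℕ} (θ η : Fin n → Bool) : Finset (Fin n × Fin n) :=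
  Finset.univ.filter fun e => e.1 < e.2 ∧ θ e.1 ≠ θ e.2 ∧ η e.1 = η e.2

/-- Hamming distance. -/
def hdist {n : ℕ} (θ η : Fin n → Bool) : ℕ := (Finset.univ.filter fun i => θ i ≠ η i).card

/-- The metric `k(θ,η) = h(θ,η) ∧ (n - h(θ,η))`. -/
def kdist {n : ℕ} (θ η : Fin n → Bool) : ℕ := min (hdist θ η) (n - hdist θ η)

/-- Size of the smallest community. -/
def countOnes {n : ℕ} (θ : Fin n → Bool) : ℕ := (Finset.univ.filter fun i => θ i = true).card

/-- The parameter space `Θ_n`. -/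
def Theta (n : ℕ) : Finset (Fin n → Bool) :=
  Finset.univ.filter fun θ => 2 * countOnes θ ≤ n ∧
    ∀ i : Fin n, 2 * countOnes θ = n → (i : ℕ) = 0 → θ i = false

/-- Posterior mass of `A ⊆ Θ_n` given data `x`, under prior mass function `π`. -/
noncomputable def postMass {n : ℕ} (p q : ℝ) (pri : (Fin n → Bool) → ℝ)
    (A : Finset (Fin n → Bool)) (x : ObsGraph n) : ℝ :=
  (∑ η ∈ A, pri η * graphPMF p q η x) / (∑ η ∈ Theta n, pri η * graphPMF p q η x)

/-- `P_θ`-expectation of the posterior mass of `A`. -/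
noncomputable def expPostMass {n : ℕ} (p q : ℝ) (pri : (Fin n → Bool) → ℝ)
    (θ : Fin n → Bool) (A : Finset (Fin n → Bool)) : ℝ :=
  ∑ x : ObsGraph n, graphPMF p q θ x * postMass p q pri A x

/-- The uniform prior on `Θ_n`. -/
noncomputable def unifPrior (n : ℕ) : (Fin n → Bool) → ℝ := fun _ => ((2:ℝ) ^ (n - 1))⁻¹

/-- Hamming ball `B_n(θ,k)` inside `Θ_n`. -/
def hball {n : ℕ} (θ : Fin n → Bool) (k : ℕ) : Finset (Fin n → Bool) :=
  (Theta n).filter fun η => kdist η θ ≤ k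

/-! The expected posterior mass of a set `A` of assignments is at most
`∑_{η ∈ A} ∑_x min (p_θ x) (p_η x) ≤ ∑_{η ∈ A} ∑_x √(p_θ x * p_η x)`. This Hellinger affinity
factorises over edges: it is `ρ ^ m` with `ρ = √(pq) + √((1-p)(1-q)) ≤ exp (-(p-q)²/(4(p+q)))`
and `m = h (n - h)` the number of edges whose connection probability differs under `θ` and `η`,
`h` being their Hamming distance. Outside `B_n(θ, k)` both `h` and `n - h` exceed `k`, so
`m ≥ (k+1) n / 2`, and a union bound over the at most `2 ^ n` assignments bounds the posterior mass
there by `2 ^ n exp (-(k+1)(c-d)²/(8(c+d)))` when `p = c/n`, `q = d/n`. For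
`I = (c-d)²/(2(c+d)) → ∞` the rate `a = 1 / (3 + √I) → 0` gives `k = ⌈a n⌉` with
`k (c-d)²/(8(c+d)) ≥ n` as soon as `I ≥ 36`, so the mass outside the ball is at most `(2/e) ^ n`. -/

section FinsetRatio

variable {ι : Type*} {s A : Finset ι} {f : ι → ℝ} {i : ι}

lemma mul_sum_div_sum_le_sum_min (hf : ∀ j ∈ s, 0 ≤ f j) (hA : A ⊆ s) (hi : i ∈ s) :
    f i * ((∑ j ∈ A, f j) / ∑ j ∈ s, f j) ≤ ∑ j ∈ A, min (f i) (f j) := by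
  have hle : ∀ j ∈ s, f j ≤ ∑ j ∈ s, f j := fun j hj => single_le_sum hf hj
  rcases (sum_nonneg hf).eq_or_lt with hD | hD
  · rw [← hD, div_zero, mul_zero]
    exact sum_nonneg fun j hj => le_min (hf i hi) (hf j (hA hj))
  rw [mul_div_assoc', mul_sum, sum_div]
  refine sum_le_sum fun j hj => le_min ?_ ?_
  · rw [div_le_iff₀ hD]
    exact mul_le_mul_of_nonneg_left (hle j (hA hj)) (hf i hi)
  · rw [div_le_iff₀ hD, mul_comm]
    exact mul_le_mul_of_nonneg_left (hle i hi) (hf j (hA hj))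

lemma mul_sum_div_sum_add_sum_sdiff_div_sum [DecidableEq ι] (hf : ∀ j ∈ s, 0 ≤ f j) (hA : A ⊆ s)
    (hi : i ∈ s) :
    f i * ((∑ j ∈ A, f j) / ∑ j ∈ s, f j + (∑ j ∈ s \ A, f j) / ∑ j ∈ s, f j) = f i := by
  rw [← add_div, add_comm, sum_sdiff hA]
  rcases (sum_nonneg hf).eq_or_lt with hD | hD
  · have : f i = 0 := le_antisymm (hD ▸ single_le_sum hf hi) (hf i hi)
    rw [this, zero_mul]
  · rw [div_self hD.ne', mul_one]

end FinsetRatio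

lemma min_le_sqrt_mul {a b : ℝ} (ha : 0 ≤ a) (hb : 0 ≤ b) : min a b ≤ √(a * b) :=
  Real.le_sqrt_of_sq_le <| by
    rw [sq]; exact mul_le_mul (min_le_left a b) (min_le_right a b) (le_min ha hb) ha

lemma rho_comm (p q : ℝ) : rho p q = rho q p := by
  simp only [rho, mul_comm]

lemma rho_self {t : ℝ} (h0 : 0 ≤ t) (h1 : t ≤ 1) : rho t t = 1 := by
  rw [rho, Real.sqrt_mul_self h0, Real.sqrt_mul_self (sub_nonneg.2 h1), add_sub_cancel]

lemma rho_nonneg (p q : ℝ) : 0 ≤ rho p q := by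
  unfold rho; positivity

lemma rho_le_one_sub_sq_sqrt_sub {p q : ℝ} (hp : p ∈ Set.Icc (0:ℝ) 1)
    (hq : q ∈ Set.Icc (0:ℝ) 1) : rho p q ≤ 1 - (√p - √q) ^ 2 / 2 := by
  have amgm : √((1 - p) * (1 - q)) ≤ ((1 - p) + (1 - q)) / 2 := by
    rw [Real.sqrt_le_left (by linarith [hp.2, hq.2])]
    nlinarith [sq_nonneg (p - q)]
  rw [rho, Real.sqrt_mul hp.1]
  nlinarith [Real.sq_sqrt hp.1, Real.sq_sqrt hq.1]

lemma sq_sub_div_le_sq_sqrt_sub {p q : ℝ} (hp : 0 ≤ p) (hq : 0 ≤ q) :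
    (p - q) ^ 2 / (4 * (p + q)) ≤ (√p - √q) ^ 2 / 2 := by
  rcases (add_nonneg hp hq).eq_or_lt with hpq | hpq
  · rw [← hpq, mul_zero, div_zero]; positivity
  have hsq : (p - q) ^ 2 = (√p - √q) ^ 2 * (√p + √q) ^ 2 := by
    conv_lhs => rw [← sq_sqrt hp, ← sq_sqrt hq]
    ring
  have hsum : (√p + √q) ^ 2 ≤ 2 * (p + q) := by
    nlinarith [sq_nonneg (√p - √q), Real.sq_sqrt hp, Real.sq_sqrt hq]
  rw [div_le_div_iff₀ (by positivity) two_pos, hsq]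
  nlinarith [sq_nonneg (√p - √q)]

lemma rho_le_exp {p q : ℝ} (hp : p ∈ Set.Icc (0:ℝ) 1) (hq : q ∈ Set.Icc (0:ℝ) 1) :
    rho p q ≤ exp (-((p - q) ^ 2 / (4 * (p + q)))) :=
  calc rho p q ≤ 1 - (√p - √q) ^ 2 / 2 := rho_le_one_sub_sq_sqrt_sub hp hq
    _ ≤ 1 - (p - q) ^ 2 / (4 * (p + q)) := by
      linarith [sq_sub_div_le_sq_sqrt_sub hp.1 hq.1]
    _ ≤ _ := Real.one_sub_le_exp_neg _

section Graph

variable {n : ℕ}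

def changedEdges (θ η : Fin n → Bool) : Finset (Edge n) :=
  univ.filter fun e => ¬(θ e.val.1 = θ e.val.2 ↔ η e.val.1 = η e.val.2)

def disagreement (θ η : Fin n → Bool) : Finset (Fin n) :=
  univ.filter fun i => θ i ≠ η i

lemma mem_changedEdges {θ η : Fin n → Bool} {e : Edge n} :
    e ∈ changedEdges θ η ↔
      ¬(e.val.1 ∈ disagreement θ η ↔ e.val.2 ∈ disagreement θ η) := by
  simp only [changedEdges, disagreement, mem_filter, mem_univ, true_and]
  cases θ e.val.1 <;> cases θ e.val.2 <;> cases η e.val.1 <;> cases η e.val.2 <;> decide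

/-- An edge changes its probability iff exactly one endpoint is relabelled; orienting it from
the relabelled endpoint to the other one identifies these edges with `S ×ˢ Sᶜ`. -/
lemma card_changedEdges (θ η : Fin n → Bool) :
    #(changedEdges θ η) = hdist θ η * (n - hdist θ η) := by
  set S := disagreement θ η
  have hS : hdist θ η = #S := rfl
  rw [hS, show n - #S = #Sᶜ by rw [card_compl, Fintype.card_fin], ← card_product]
  refine card_bij (fun e _ => if e.val.1 ∈ S then e.val else e.val.swap) ?_ ?_ ?_
  · intro e he
    rw [mem_changedEdges] at he
    split_ifs <;> simp only [mem_product, mem_compl, Prod.fst_swap, Prod.snd_swap] <;> tauto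
  · intro e₁ _ e₂ _ heq
    have l₁ := e₁.prop
    have l₂ := e₂.prop
    apply Subtype.ext
    split_ifs at heq
    · exact heq
    · rw [heq] at l₁; exact absurd l₁ (lt_asymm l₂)
    · rw [← heq] at l₂; exact absurd l₂ (lt_asymm l₁)
    · simpa using congrArg Prod.swap heq
  · rintro ⟨a, b⟩ hab
    simp only [mem_product, mem_compl] at hab
    obtain ⟨ha, hb⟩ := hab
    have hchanged : ∀ {e : Edge n}, e.val = (a, b) ∨ e.val = (b, a) → e ∈ changedEdges θ η := by
      rintro e (he | he) <;> rw [mem_changedEdges, he] <;> tauto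
    rcases lt_or_gt_of_ne (show a ≠ b by rintro rfl; exact hb ha) with h | h
    · exact ⟨⟨(a, b), h⟩, hchanged (.inl rfl), by simp [ha]⟩
    · exact ⟨⟨(b, a), h⟩, hchanged (.inr rfl), by simp [hb]⟩

end Graph

section Likelihood

variable {n : ℕ} {p q : ℝ}

lemma sum_prod_bool {ι R : Type*} [Fintype ι] [DecidableEq ι] [CommSemiring R]
    (f : ι → Bool → R) :
    ∑ x : ι → Bool, ∏ i, f i (x i) = ∏ i, (f i true + f i false) := by
  simp only [← Fintype.prod_sum, Fintype.sum_bool]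

lemma sum_graphPMF (p q : ℝ) (θ : Fin n → Bool) : ∑ x : ObsGraph n, graphPMF p q θ x = 1 := by
  simp only [graphPMF]
  rw [sum_prod_bool fun e b => if b then edgeProb p q θ e else 1 - edgeProb p q θ e]
  simp

lemma edgeProb_mem_Icc (hp : p ∈ Set.Icc (0:ℝ) 1) (hq : q ∈ Set.Icc (0:ℝ) 1)
    (θ : Fin n → Bool) (e : Edge n) : edgeProb p q θ e ∈ Set.Icc (0:ℝ) 1 := by
  unfold edgeProb; split_ifs <;> assumption

lemma bernoulli_nonneg {t : ℝ} (ht : t ∈ Set.Icc (0:ℝ) 1) (b : Bool) :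
    0 ≤ if b then t else 1 - t := by
  split_ifs <;> linarith [ht.1, ht.2]

lemma graphPMF_nonneg (hp : p ∈ Set.Icc (0:ℝ) 1) (hq : q ∈ Set.Icc (0:ℝ) 1)
    (θ : Fin n → Bool) (x : ObsGraph n) : 0 ≤ graphPMF p q θ x :=
  prod_nonneg fun e _ => bernoulli_nonneg (edgeProb_mem_Icc hp hq θ e) (x e)

lemma rho_edgeProb (hp : p ∈ Set.Icc (0:ℝ) 1) (hq : q ∈ Set.Icc (0:ℝ) 1)
    (θ η : Fin n → Bool) (e : Edge n) :
    rho (edgeProb p q θ e) (edgeProb p q η e) = if e ∈ changedEdges θ η then rho p q else 1 := by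
  simp only [changedEdges, mem_filter, mem_univ, true_and, edgeProb]
  by_cases hθ : θ e.val.1 = θ e.val.2 <;> by_cases hη : η e.val.1 = η e.val.2 <;>
    simp [hθ, hη, rho_self hp.1 hp.2, rho_self hq.1 hq.2, rho_comm q p]

lemma sum_sqrt_graphPMF_mul (hp : p ∈ Set.Icc (0:ℝ) 1) (hq : q ∈ Set.Icc (0:ℝ) 1)
    (θ η : Fin n → Bool) :
    ∑ x : ObsGraph n, √(graphPMF p q θ x * graphPMF p q η x)
      = rho p q ^ #(changedEdges θ η) := by
  have hθ := edgeProb_mem_Icc hp hq θ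
  have hη := edgeProb_mem_Icc hp hq η
  calc ∑ x : ObsGraph n, √(graphPMF p q θ x * graphPMF p q η x)
      = ∑ x : ObsGraph n, ∏ e, √((if x e then edgeProb p q θ e else 1 - edgeProb p q θ e) *
          (if x e then edgeProb p q η e else 1 - edgeProb p q η e)) := by
        refine sum_congr rfl fun x _ => ?_
        rw [graphPMF, graphPMF, ← prod_mul_distrib, Real.sqrt_prod]
        exact fun e _ => mul_nonneg (bernoulli_nonneg (hθ e) _) (bernoulli_nonneg (hη e) _)
    _ = ∏ e, rho (edgeProb p q θ e) (edgeProb p q η e) := by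
        rw [sum_prod_bool fun e b => √((if b then edgeProb p q θ e else 1 - edgeProb p q θ e) *
          (if b then edgeProb p q η e else 1 - edgeProb p q η e))]
        simp [rho]
    _ = rho p q ^ #(changedEdges θ η) := by
        simp only [rho_edgeProb hp hq, Fintype.prod_ite_mem, prod_const]

end Likelihood

section Posterior

variable {n : ℕ} {p q : ℝ} {θ : Fin n → Bool} {A : Finset (Fin n → Bool)}

lemma postMass_unifPrior (x : ObsGraph n) :
    postMass p q (unifPrior n) A x
      = (∑ η ∈ A, graphPMF p q η x) / ∑ η ∈ Theta n, graphPMF p q η x := by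
  simp only [postMass, unifPrior, ← mul_sum]
  exact mul_div_mul_left _ _ (by positivity)

lemma expPostMass_nonneg (hp : p ∈ Set.Icc (0:ℝ) 1) (hq : q ∈ Set.Icc (0:ℝ) 1) :
    0 ≤ expPostMass p q (unifPrior n) θ A := by
  have hf := graphPMF_nonneg (n := n) hp hq
  refine sum_nonneg fun x _ => mul_nonneg (hf θ x) ?_
  rw [postMass_unifPrior]
  exact div_nonneg (sum_nonneg fun η _ => hf η x) (sum_nonneg fun η _ => hf η x)

lemma expPostMass_add_sdiff (hp : p ∈ Set.Icc (0:ℝ) 1) (hq : q ∈ Set.Icc (0:ℝ) 1)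
    (hθ : θ ∈ Theta n) (hA : A ⊆ Theta n) :
    expPostMass p q (unifPrior n) θ A + expPostMass p q (unifPrior n) θ (Theta n \ A) = 1 := by
  simp only [expPostMass, postMass_unifPrior, ← sum_add_distrib, ← mul_add]
  rw [← sum_graphPMF p q θ]
  exact sum_congr rfl fun x _ => mul_sum_div_sum_add_sum_sdiff_div_sum
    (fun η _ => graphPMF_nonneg hp hq η x) hA hθ

lemma expPostMass_le_sum_rho_pow (hp : p ∈ Set.Icc (0:ℝ) 1) (hq : q ∈ Set.Icc (0:ℝ) 1)
    (hθ : θ ∈ Theta n) (hA : A ⊆ Theta n) :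
    expPostMass p q (unifPrior n) θ A ≤ ∑ η ∈ A, rho p q ^ #(changedEdges θ η) := by
  have hf := graphPMF_nonneg (n := n) hp hq
  calc expPostMass p q (unifPrior n) θ A
      ≤ ∑ x : ObsGraph n, ∑ η ∈ A, min (graphPMF p q θ x) (graphPMF p q η x) := by
        refine sum_le_sum fun x _ => ?_
        rw [postMass_unifPrior]
        exact mul_sum_div_sum_le_sum_min (fun η _ => hf η x) hA hθ
    _ ≤ ∑ η ∈ A, ∑ x : ObsGraph n, √(graphPMF p q θ x * graphPMF p q η x) := by
        rw [sum_comm]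
        exact sum_le_sum fun η _ => sum_le_sum fun x _ => min_le_sqrt_mul (hf θ x) (hf η x)
    _ = ∑ η ∈ A, rho p q ^ #(changedEdges θ η) := by
        simp only [sum_sqrt_graphPMF_mul hp hq]

end Posterior

lemma succ_mul_le_two_mul_mul_sub {k h n : ℕ} (hk : k < min h (n - h)) :
    (k + 1) * n ≤ 2 * (h * (n - h)) := by
  obtain ⟨m, rfl⟩ : ∃ m, n = h + m := ⟨n - h, by omega⟩
  rw [Nat.add_sub_cancel_left] at hk ⊢
  have h1 : k + 1 ≤ h := by omega
  have h2 : k + 1 ≤ m := by omega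
  nlinarith

lemma hdist_comm {n : ℕ} (θ η : Fin n → Bool) : hdist θ η = hdist η θ := by
  simp only [hdist, ne_comm]

lemma hball_subset {n : ℕ} {θ : Fin n → Bool} {k : ℕ} : hball θ k ⊆ Theta n :=
  filter_subset _ _

section Tail

variable {n : ℕ} {p q : ℝ} {θ : Fin n → Bool}

lemma rho_pow_le_of_lt_kdist (hp : p ∈ Set.Icc (0:ℝ) 1) (hq : q ∈ Set.Icc (0:ℝ) 1)
    {η : Fin n → Bool} {k : ℕ} (hk : k < kdist η θ) :
    rho p q ^ #(changedEdges θ η)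
      ≤ exp (-((p - q) ^ 2 / (4 * (p + q)) * ((k + 1) * n / 2))) := by
  set ε := (p - q) ^ 2 / (4 * (p + q))
  have hε : 0 ≤ ε := div_nonneg (sq_nonneg _) (by linarith [hp.1, hq.1])
  have hcard : ((k + 1) * n / 2 : ℝ) ≤ #(changedEdges θ η) := by
    rw [kdist, hdist_comm] at hk
    rw [card_changedEdges, div_le_iff₀ two_pos]
    exact_mod_cast (mul_comm _ 2).trans_ge (succ_mul_le_two_mul_mul_sub hk)
  calc rho p q ^ #(changedEdges θ η) ≤ exp (-ε) ^ #(changedEdges θ η) :=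
        pow_le_pow_left₀ (rho_nonneg p q) (rho_le_exp hp hq) _
    _ = exp (-(ε * #(changedEdges θ η))) := by rw [← exp_nat_mul]; ring_nf
    _ ≤ _ := exp_le_exp.2 (neg_le_neg (mul_le_mul_of_nonneg_left hcard hε))

lemma expPostMass_sdiff_hball_le (hp : p ∈ Set.Icc (0:ℝ) 1) (hq : q ∈ Set.Icc (0:ℝ) 1)
    (hθ : θ ∈ Theta n) (k : ℕ) :
    expPostMass p q (unifPrior n) θ (Theta n \ hball θ k)
      ≤ 2 ^ n * exp (-((p - q) ^ 2 / (4 * (p + q)) * ((k + 1) * n / 2))) := by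
  have hfar : ∀ η ∈ Theta n \ hball θ k, k < kdist η θ := by
    intro η hη
    rw [Finset.mem_sdiff, hball, Finset.mem_filter] at hη
    exact not_le.1 fun h => hη.2 ⟨hη.1, h⟩
  have hcard : (#(Theta n \ hball θ k) : ℝ) ≤ 2 ^ n := by
    exact_mod_cast (card_le_univ _).trans_eq (by simp)
  calc expPostMass p q (unifPrior n) θ (Theta n \ hball θ k)
      ≤ ∑ η ∈ Theta n \ hball θ k, rho p q ^ #(changedEdges θ η) :=
        expPostMass_le_sum_rho_pow hp hq hθ sdiff_subset
    _ ≤ #(Theta n \ hball θ k) * exp (-((p - q) ^ 2 / (4 * (p + q)) * ((k + 1) * n / 2))) := by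
        rw [← nsmul_eq_mul]
        exact sum_le_card_nsmul _ _ _ fun η hη => rho_pow_le_of_lt_kdist hp hq (hfar η hη)
    _ ≤ _ := mul_le_mul_of_nonneg_right hcard (exp_nonneg _)

lemma expPostMass_sdiff_hball_le_pow (hp : p ∈ Set.Icc (0:ℝ) 1) (hq : q ∈ Set.Icc (0:ℝ) 1)
    (hθ : θ ∈ Theta n) {k : ℕ} (hk : 2 ≤ k * ((p - q) ^ 2 / (4 * (p + q)))) :
    expPostMass p q (unifPrior n) θ (Theta n \ hball θ k) ≤ (2 / exp 1) ^ n := by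
  have hε : 0 ≤ (p - q) ^ 2 / (4 * (p + q)) := div_nonneg (sq_nonneg _) (by linarith [hp.1, hq.1])
  have hexp : (n : ℝ) ≤ (p - q) ^ 2 / (4 * (p + q)) * ((k + 1) * n / 2) := by
    nlinarith [(n.cast_nonneg : (0:ℝ) ≤ n)]
  calc _ ≤ 2 ^ n * exp (-((p - q) ^ 2 / (4 * (p + q)) * ((k + 1) * n / 2))) :=
        expPostMass_sdiff_hball_le hp hq hθ k
    _ ≤ 2 ^ n * exp (-n) := by gcongr
    _ = (2 / exp 1) ^ n := by rw [div_pow, ← exp_nat_mul, mul_one, exp_neg, div_eq_mul_inv]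

end Tail

lemma sq_sub_div_div_add_div_eq (c d x : ℝ) :
    (c / x - d / x) ^ 2 / (4 * (c / x + d / x)) = (c - d) ^ 2 / (2 * (c + d)) / (2 * x) := by
  rcases eq_or_ne x 0 with rfl | hx
  · simp
  rcases eq_or_ne (c + d) 0 with hcd | hcd
  · rw [← add_div, hcd]; simp
  field_simp
  ring

lemma two_le_ceil_mul_div {x : ℝ} (hx : 36 ≤ x) {n : ℕ} (hn : n ≠ 0) :
    2 ≤ ⌈(3 + √x)⁻¹ * n⌉₊ * (x / (2 * n)) := by
  have hs : 6 ≤ √x := Real.le_sqrt_of_sq_le (by linarith)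
  have hrate : 4 ≤ (3 + √x)⁻¹ * x := by
    rw [inv_mul_eq_div, le_div_iff₀ (by positivity)]
    nlinarith [Real.sq_sqrt (by linarith : (0:ℝ) ≤ x)]
  calc (2 : ℝ) ≤ (3 + √x)⁻¹ * n * (x / (2 * n)) := by
        rw [show (3 + √x)⁻¹ * n * (x / (2 * n)) = (3 + √x)⁻¹ * x / 2 by field_simp]
        linarith
    _ ≤ _ := mul_le_mul_of_nonneg_right (Nat.le_ceil _) (by positivity)

theorem stmt13_general (c d : ℕ → ℝ)
    (hp : ∀ n, 2 ≤ n → c n / n ∈ Set.Ioo (0:ℝ) 1)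
    (hq : ∀ n, 2 ≤ n → d n / n ∈ Set.Ioo (0:ℝ) 1)
    (θ : (n : ℕ) → Fin n → Bool) (hθ : ∀ n, 2 ≤ n → θ n ∈ Theta n)
    (hcond : Filter.Tendsto (fun n : ℕ => (c n - d n)^2 / (2 * (c n + d n)))
      Filter.atTop Filter.atTop) :
    ∃ a : ℕ → ℝ, (∀ n, a n ∈ Set.Ioo (0:ℝ) (1/2)) ∧
      Filter.Tendsto a Filter.atTop (nhds 0) ∧
      Filter.Tendsto (fun n : ℕ =>
          expPostMass (c n / n) (d n / n) (unifPrior n) (θ n)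
            (hball (θ n) ⌈a n * n⌉₊))
        Filter.atTop (nhds 1) := by
  set I := fun n : ℕ => (c n - d n) ^ 2 / (2 * (c n + d n))
  set a := fun n => (3 + √(I n))⁻¹
  have hIcc : ∀ n, 2 ≤ n → c n / n ∈ Set.Icc (0:ℝ) 1 ∧ d n / n ∈ Set.Icc (0:ℝ) 1 :=
    fun n hn => ⟨Set.Ioo_subset_Icc_self (hp n hn), Set.Ioo_subset_Icc_self (hq n hn)⟩
  have htail : Tendsto (fun n => expPostMass (c n / n) (d n / n) (unifPrior n) (θ n)
      (Theta n \ hball (θ n) ⌈a n * n⌉₊)) atTop (nhds 0) := by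
    refine squeeze_zero' ?_ ?_ (tendsto_pow_atTop_nhds_zero_of_lt_one (by positivity)
      ((div_lt_one (exp_pos 1)).2 exp_one_gt_two))
    · filter_upwards [eventually_ge_atTop 2] with n hn
      exact expPostMass_nonneg (hIcc n hn).1 (hIcc n hn).2
    · filter_upwards [eventually_ge_atTop 2, hcond.eventually_ge_atTop 36] with n hn hI
      refine expPostMass_sdiff_hball_le_pow (hIcc n hn).1 (hIcc n hn).2 (hθ n hn) ?_
      rw [sq_sub_div_div_add_div_eq]
      exact two_le_ceil_mul_div hI (by omega)
  refine ⟨a, fun n => ⟨by positivity, ?_⟩,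
    (tendsto_atTop_add_const_left _ 3 (tendsto_sqrt_atTop.comp hcond)).inv_tendsto_atTop, ?_⟩
  · calc a n ≤ 3⁻¹ := inv_anti₀ (by norm_num) (le_add_of_nonneg_right (sqrt_nonneg _))
      _ < 1 / 2 := by norm_num
  · refine (sub_zero (1 : ℝ) ▸ htail.const_sub 1).congr' ?_
    filter_upwards [eventually_ge_atTop 2] with n hn
    rw [sub_eq_iff_eq_add]
    exact (expPostMass_add_sdiff (hIcc n hn).1 (hIcc n hn).2 (hθ n hn) hball_subset).symm

/-- if `(c_n − d_n)²/(2(c_n + d_n)) → ∞` then the posterior recovers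
the true assignment almost-exactly with error rate `⌈a_n n⌉` for some vanishing
fraction `a_n → 0`. -/
theorem stmt13 (c d : ℕ → ℝ) (hc0 : ∀ n, 2 ≤ n → 0 < c n) (hd0 : ∀ n, 2 ≤ n → 0 < d n)
    (hco : c =o[Filter.atTop] fun n : ℕ => Real.log n)
    (hdo : d =o[Filter.atTop] fun n : ℕ => Real.log n)
    (hp : ∀ n, 2 ≤ n → c n / n ∈ Set.Ioo (0:ℝ) 1)
    (hq : ∀ n, 2 ≤ n → d n / n ∈ Set.Ioo (0:ℝ) 1)
    (θ : (n : ℕ) → Fin n → Bool) (hθ : ∀ n, 2 ≤ n → θ n ∈ Theta n)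
    (hcond : Filter.Tendsto (fun n : ℕ => (c n - d n)^2 / (2 * (c n + d n)))
      Filter.atTop Filter.atTop) :
    ∃ a : ℕ → ℝ, (∀ n, a n ∈ Set.Ioo (0:ℝ) (1/2)) ∧
      Filter.Tendsto a Filter.atTop (nhds 0) ∧
      Filter.Tendsto (fun n : ℕ =>
          expPostMass (c n / n) (d n / n) (unifPrior n) (θ n)
            (hball (θ n) ⌈a n * n⌉₊))
        Filter.atTop (nhds 1) :=
  stmt13_general c d hp hq θ hθ hcond
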